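/- arXiv:2506.16646 — 2 statements merged into one kernel-verified Lean document; each statement's English description precedes it below -/
import Mathlib

section
/- Corollary (error bound for Burer–Monteiro factors): Let U be a d × r complex matrix with Re(tr(Uᴴ U)) = 1 and Re(tr(Uᴴ A_i U)) > 0 for every i with f_i > 0. Then ρ̃ = U Uᴴ is a density matrix (Hermitian, PSD, trace 1), and with G = −Σ_{i=1}^m (f_i / Re(tr(A_i ρ̃)))·A_i and μ = max(0, −λ_min(G)), for every density matrix ρ with Re(tr(A_i ρ)) > 0 for every i with f_i > 0 one has L(ρ̃) ≤ L(ρ) + Re(tr(G ρ̃)) + μ. -/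
/-!
The negative log-likelihood is convex, and its gradient at `σ` with respect to the pairing
`(X, Y) ↦ Re tr (X Y)` is `G = −Σ_i (f_i / Re tr(A_i σ)) A_i`. The first-order convexity bound
`L(ρ̃) ≤ L(ρ) + Re tr(G ρ̃) − Re tr(G ρ)` comes term by term from `log x ≤ x − 1`, and for a
density matrix `ρ` the shift `G − λ_min(G) I` is positive semidefinite, so
`−Re tr(G ρ) ≤ −λ_min(G) ≤ μ`.
-/

open Matrix BigOperators ComplexOrder

/-- Negative log-likelihood `L(ρ) = −Σ_i f_i · log(Re(tr(A_i ρ)))`. -/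
noncomputable def negLogLik {d m : ℕ} (A : Fin m → Matrix (Fin d) (Fin d) ℂ)
    (f : Fin m → ℝ) (ρ : Matrix (Fin d) (Fin d) ℂ) : ℝ :=
  -∑ i, f i * Real.log ((A i * ρ).trace.re)

namespace Matrix

variable {𝕜 m n : Type*} [RCLike 𝕜] [Fintype m] [Fintype n]

open scoped MatrixOrder in
theorem PosSemidef.trace_mul_nonneg {P Q : Matrix n n 𝕜}
    (hP : P.PosSemidef) (hQ : Q.PosSemidef) : 0 ≤ (P * Q).trace := by
  classical
  obtain ⟨B, rfl⟩ := CStarAlgebra.nonneg_iff_eq_star_mul_self.mp hP.nonneg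
  rw [mul_assoc, trace_mul_comm, star_eq_conjTranspose]
  exact (hQ.mul_mul_conjTranspose_same B).trace_nonneg

open scoped MatrixOrder in
theorem IsHermitian.iInf_eigenvalues_mul_re_trace_le [DecidableEq n] {G ρ : Matrix n n 𝕜}
    (hG : G.IsHermitian) (hρ : ρ.PosSemidef) :
    (⨅ j, hG.eigenvalues j) * RCLike.re ρ.trace ≤ RCLike.re (G * ρ).trace := by
  set c := ⨅ j, hG.eigenvalues j
  have hcG : algebraMap ℝ (Matrix n n 𝕜) c ≤ G := by
    rw [algebraMap_le_iff_le_spectrum (ha := hG.isSelfAdjoint),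
      hG.spectrum_real_eq_range_eigenvalues]
    rintro _ ⟨j, rfl⟩
    exact ciInf_le (Set.finite_range _).bddBelow j
  have hshift := (RCLike.nonneg_iff.mp ((le_iff.mp hcG).trace_mul_nonneg hρ)).1
  rw [sub_mul, trace_sub, Algebra.algebraMap_eq_smul_one, smul_mul, one_mul, trace_smul]
    at hshift
  simpa [RCLike.smul_re] using hshift

theorem trace_mul_conjTranspose_self_eq_one (U : Matrix m n 𝕜)
    (hU : RCLike.re (Uᴴ * U).trace = 1) : (U * Uᴴ).trace = 1 := by
  have him := (RCLike.nonneg_iff.mp (posSemidef_conjTranspose_mul_self U).trace_nonneg).2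
  rw [trace_mul_comm]
  exact RCLike.ext (by simpa using hU) (by simpa using him)

end Matrix

theorem Real.mul_log_sub_log_le_div_mul_sub {f a c : ℝ} (hf : 0 ≤ f)
    (hac : 0 < f → 0 < a ∧ 0 < c) :
    f * (Real.log c - Real.log a) ≤ f / a * (c - a) := by
  rcases hf.eq_or_lt with rfl | hf
  · simp
  obtain ⟨ha, hc⟩ := hac hf
  calc f * (Real.log c - Real.log a) = f * Real.log (c / a) := by
        rw [Real.log_div hc.ne' ha.ne']
    _ ≤ f * (c / a - 1) :=
        mul_le_mul_of_nonneg_left (Real.log_le_sub_one_of_pos (by positivity)) hf.le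
    _ = f / a * (c - a) := by field_simp

noncomputable def negLogLikGrad {d m : ℕ} (A : Fin m → Matrix (Fin d) (Fin d) ℂ)
    (f : Fin m → ℝ) (σ : Matrix (Fin d) (Fin d) ℂ) : Matrix (Fin d) (Fin d) ℂ :=
  -∑ i, (f i / ((A i * σ).trace).re) • A i

section NegLogLik

variable {d m : ℕ} (A : Fin m → Matrix (Fin d) (Fin d) ℂ) (f : Fin m → ℝ)

theorem re_trace_negLogLikGrad_mul (σ τ : Matrix (Fin d) (Fin d) ℂ) :
    ((negLogLikGrad A f σ * τ).trace).re =
      -∑ i, f i / ((A i * σ).trace).re * ((A i * τ).trace).re := by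
  simp [negLogLikGrad, Finset.sum_mul, Complex.re_sum]

theorem negLogLik_le_add_re_trace_negLogLikGrad_mul_sub {σ ρ : Matrix (Fin d) (Fin d) ℂ}
    (hf : ∀ i, 0 ≤ f i) (hσ : ∀ i, 0 < f i → 0 < ((A i * σ).trace).re)
    (hρ : ∀ i, 0 < f i → 0 < ((A i * ρ).trace).re) :
    negLogLik A f σ ≤ negLogLik A f ρ + ((negLogLikGrad A f σ * (σ - ρ)).trace).re := by
  have hsum := Finset.sum_le_sum fun i (_ : i ∈ Finset.univ) ↦
    Real.mul_log_sub_log_le_div_mul_sub (hf i) fun hfi ↦ ⟨hσ i hfi, hρ i hfi⟩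
  simp only [re_trace_negLogLikGrad_mul, negLogLik, mul_sub, trace_sub, Complex.sub_re,
    Finset.sum_sub_distrib] at hsum ⊢
  linarith

end NegLogLik

theorem bm_error_bound_general {d r m : ℕ}
    (A : Fin m → Matrix (Fin d) (Fin d) ℂ) (f : Fin m → ℝ)
    (hf : ∀ i, 0 ≤ f i)
    (U : Matrix (Fin d) (Fin r) ℂ)
    (hU : ((Uᴴ * U).trace).re = 1)
    (hUpos : ∀ i, 0 < f i → 0 < ((Uᴴ * A i * U).trace).re)
    (G : Matrix (Fin d) (Fin d) ℂ)
    (hGdef : G = -∑ i, (f i / ((A i * (U * Uᴴ)).trace).re) • A i)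
    (hG : G.IsHermitian)
    (μ : ℝ) (hμ : μ = max 0 (-(⨅ j, hG.eigenvalues j))) :
    (U * Uᴴ).PosSemidef ∧ (U * Uᴴ).trace = 1 ∧
      ∀ ρ : Matrix (Fin d) (Fin d) ℂ, ρ.PosSemidef → ρ.trace = 1 →
        (∀ i, 0 < f i → 0 < ((A i * ρ).trace).re) →
        negLogLik A f (U * Uᴴ) ≤ negLogLik A f ρ + ((G * (U * Uᴴ)).trace).re + μ := by
  refine ⟨posSemidef_self_mul_conjTranspose U, trace_mul_conjTranspose_self_eq_one U hU,
    fun ρ hρ hρtr hρpos ↦ ?_⟩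
  have hUUpos : ∀ i, 0 < f i → 0 < ((A i * (U * Uᴴ)).trace).re := fun i hfi ↦ by
    rw [← Matrix.mul_assoc, trace_mul_comm, ← Matrix.mul_assoc]
    exact hUpos i hfi
  have hconvex := negLogLik_le_add_re_trace_negLogLikGrad_mul_sub A f hf hUUpos hρpos
  rw [← show G = negLogLikGrad A f (U * Uᴴ) from hGdef, Matrix.mul_sub, trace_sub,
    Complex.sub_re] at hconvex
  have heig : ⨅ j, hG.eigenvalues j ≤ ((G * ρ).trace).re := by
    simpa [hρtr] using hG.iInf_eigenvalues_mul_re_trace_le hρ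
  have hμ' : -(⨅ j, hG.eigenvalues j) ≤ μ := hμ ▸ le_max_right _ _
  linarith

/-- Corollary (error bound for Burer–Monteiro factors): if `U` has unit
Hilbert–Schmidt norm then `ρ̃ = U Uᴴ` is a density matrix and the a posteriori
suboptimality bound `L(ρ̃) ≤ L(ρ) + Re(tr(G ρ̃)) + μ` holds for every feasible
density matrix `ρ`, where `G = −Σ_i (f_i / Re(tr(A_i ρ̃)))·A_i` and
`μ = max(0, −λ_min(G))`. -/
theorem bm_error_bound {d r m : ℕ} (hd : 1 ≤ d) (hr : 1 ≤ r) (hm : 1 ≤ m)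
    (A : Fin m → Matrix (Fin d) (Fin d) ℂ) (f : Fin m → ℝ)
    (hA : ∀ i, (A i).PosSemidef) (hf : ∀ i, 0 ≤ f i)
    (U : Matrix (Fin d) (Fin r) ℂ)
    (hU : ((Uᴴ * U).trace).re = 1)
    (hUpos : ∀ i, 0 < f i → 0 < ((Uᴴ * A i * U).trace).re)
    (G : Matrix (Fin d) (Fin d) ℂ)
    (hGdef : G = -∑ i, (f i / ((A i * (U * Uᴴ)).trace).re) • A i)
    (hG : G.IsHermitian)
    (μ : ℝ) (hμ : μ = max 0 (-(⨅ j, hG.eigenvalues j))) :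
    (U * Uᴴ).PosSemidef ∧ (U * Uᴴ).trace = 1 ∧
      ∀ ρ : Matrix (Fin d) (Fin d) ℂ, ρ.PosSemidef → ρ.trace = 1 →
        (∀ i, 0 < f i → 0 < ((A i * ρ).trace).re) →
        negLogLik A f (U * Uᴴ) ≤ negLogLik A f ρ + ((G * (U * Uᴴ)).trace).re + μ :=
  bm_error_bound_general A f hf U hU hUpos G hGdef hG μ hμ
end

section
/- Theorem 1 (Burer–Monteiro local minimality transfer, real symmetric case): Let F and h be continuous real-valued functions on the space of d × d real matrices, and fix r with 1 ≤ r ≤ d. Let U⋆ be a d × r real matrix with h(U⋆ U⋆ᵀ) = 0, and set ρ⋆ = U⋆ U⋆ᵀ. Then ρ⋆ is a local minimizer of F on the set {ρ : ρ symmetric positive semidefinite, h(ρ) = 0, rank(ρ) ≤ r} if and only if U⋆ is a local minimizer of the map U ↦ F(U Uᵀ) on the set {U ∈ ℝ^{d×r} : h(U Uᵀ) = 0}. -/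
/-!
Write `φ U = U Uᵀ`. By the spectral theorem its range is the set of positive semidefinite
matrices of rank at most `r`, and the constraint set for `U` is the `φ`-preimage of `{h = 0}`;
so both sides say the same thing once `φ` maps the neighbourhood filter of `U⋆` onto that of
`ρ⋆` within `range φ`. Two factors of one matrix differ by an orthogonal matrix
(`W Wᵀ = U Uᵀ → U = W Q`), so `φ` maps a neighbourhood of any `W` in the fibre over `ρ⋆` into
the image of a neighbourhood of `U⋆`. Since `‖U‖² ≤ ‖U Uᵀ‖`, points of `range φ` approaching
`ρ⋆` have factors clustering at some `W` of that fibre, hence are eventually images of points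
near `U⋆`.
-/

open Matrix Filter Set Topology

theorem LinearMap.exists_linearIsometryEquiv_comp_eq {𝕜 V E : Type*} [RCLike 𝕜]
    [AddCommGroup V] [Module 𝕜 V] [NormedAddCommGroup E] [InnerProductSpace 𝕜 E]
    [FiniteDimensional 𝕜 E] (S T : V →ₗ[𝕜] E) (h : ∀ x, ‖T x‖ = ‖S x‖) :
    ∃ e : E ≃ₗᵢ[𝕜] E, ∀ x, e (S x) = T x := by
  have hker : LinearMap.ker S ≤ LinearMap.ker T := fun x hx => by
    rw [mem_ker, ← norm_eq_zero, h, norm_eq_zero]; exact hx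
  let L₀ : LinearMap.range S →ₗ[𝕜] E :=
    (LinearMap.ker S).liftQ T hker ∘ₗ S.quotKerEquivRange.symm.toLinearMap
  have hL₀ : ∀ x, L₀ ⟨S x, mem_range_self S x⟩ = T x := fun x => by
    simp [L₀, quotKerEquivRange_symm_apply_image]
  let L : LinearMap.range S →ₗᵢ[𝕜] E :=
    ⟨L₀, by rintro ⟨-, x, rfl⟩; exact (hL₀ x).symm ▸ h x⟩
  refine ⟨L.extend.toLinearIsometryEquiv rfl, fun x => ?_⟩
  rw [LinearIsometry.coe_toLinearIsometryEquiv]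
  exact (L.extend_apply ⟨S x, mem_range_self S x⟩).trans (hL₀ x)

theorem Matrix.norm_toEuclideanLin_transpose_sq {m n : Type*} [Fintype m] [Fintype n]
    [DecidableEq m] (C : Matrix m n ℝ) (x : EuclideanSpace ℝ m) :
    ‖toEuclideanLin Cᵀ x‖ ^ 2 = WithLp.ofLp x ⬝ᵥ (C * Cᵀ) *ᵥ WithLp.ofLp x := by
  rw [← real_inner_self_eq_norm_sq, EuclideanSpace.inner_eq_star_dotProduct,
    toLpLin_apply, WithLp.ofLp_toLp, star_trivial, ← mulVec_mulVec, dotProduct_mulVec x.ofLp,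
    mulVec_transpose]

theorem Matrix.exists_mem_orthogonalGroup_eq_mul_of_mul_transpose_eq {m n : Type*} [Fintype m]
    [Fintype n] [DecidableEq n] {A B : Matrix m n ℝ} (h : A * Aᵀ = B * Bᵀ) :
    ∃ Q ∈ orthogonalGroup n ℝ, A = B * Q := by
  classical
  obtain ⟨e, he⟩ :=
    (toEuclideanLin Bᵀ).exists_linearIsometryEquiv_comp_eq (toEuclideanLin Aᵀ) fun x => by
      rw [← sq_eq_sq₀ (norm_nonneg _) (norm_nonneg _), norm_toEuclideanLin_transpose_sq,
        norm_toEuclideanLin_transpose_sq, h]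
  let b := EuclideanSpace.basisFun n ℝ
  set M := LinearMap.toMatrix b.toBasis b.toBasis e.toLinearEquiv
  have hM : M ∈ unitaryGroup n ℝ := e.toMatrix_mem_unitaryGroup b b
  have hMe : toEuclideanLin M = e.toLinearEquiv.toLinearMap := by
    rw [toEuclideanLin_eq_toLin_orthonormal, toLin_toMatrix]
  have hMB : M * Bᵀ = Aᵀ := by
    apply toEuclideanLin.injective
    rw [toLpLin_mul_same, hMe]
    exact LinearMap.ext he
  refine ⟨Mᵀ, ?_, ?_⟩
  · simpa [star_eq_conjTranspose] using Unitary.star_mem hM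
  · rw [← transpose_transpose A, ← hMB, transpose_mul, transpose_transpose]

theorem Matrix.submatrix_val_mul_transpose_submatrix_val {m n R : Type*} [Fintype n]
    [CommSemiring R]
    {p : n → Prop} [DecidablePred p] {A : Matrix m n R} (hA : ∀ i j, ¬ p j → A i j = 0) :
    A.submatrix id (Subtype.val : Subtype p → n) *
      Aᵀ.submatrix (Subtype.val : Subtype p → n) id = A * Aᵀ := by
  ext i k
  rw [mul_apply, mul_apply]
  simp only [submatrix_apply, transpose_apply, id]
  rw [← Fintype.sum_subtype_add_sum_subtype p, Fintype.sum_eq_zero (fun j : {j // ¬ p j} => _)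
    fun j => by rw [hA i j j.2, zero_mul], add_zero]

theorem Matrix.mul_submatrix_one_mul_transpose {m n p R : Type*} [Fintype n] [Fintype p]
    [DecidableEq n] [DecidableEq p] [CommSemiring R] (A : Matrix m n R) (e : n ↪ p) :
    A * (1 : Matrix p p R).submatrix e id * (A * (1 : Matrix p p R).submatrix e id)ᵀ
      = A * Aᵀ := by
  rw [transpose_mul, transpose_submatrix, transpose_one, ← Matrix.mul_assoc, Matrix.mul_assoc A,
    ← submatrix_mul _ _ _ _ _ Function.bijective_id, one_mul, submatrix_one_embedding,
    Matrix.mul_one]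

theorem Matrix.PosSemidef.exists_eq_mul_transpose_of_rank_le {m q : Type*} [Fintype m]
    [DecidableEq m] [Fintype q] {ρ : Matrix m m ℝ} (hρ : ρ.PosSemidef)
    (hrank : ρ.rank ≤ Fintype.card q) : ∃ U : Matrix m q ℝ, ρ = U * Uᵀ := by
  classical
  have hspec := hρ.1.spectral_theorem
  simp only [Unitary.conjStarAlgAut_apply, star_eq_conjTranspose,
    conjTranspose_eq_transpose_of_trivial, RCLike.ofReal_real_eq_id, Function.id_comp] at hspec
  obtain ⟨e⟩ : Nonempty ({j // hρ.1.eigenvalues j ≠ 0} ↪ q) :=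
    Function.Embedding.nonempty_of_card_le (hρ.1.rank_eq_card_non_zero_eigs ▸ hrank)
  have hev := hρ.eigenvalues_nonneg
  -- forget that `ev` and `P` are built from `hρ`, so that `ρ` itself can be substituted away
  generalize hρ.1.eigenvalues = ev at hspec hev e
  generalize (hρ.1.eigenvectorUnitary : Matrix m m ℝ) = P at hspec
  subst hspec
  set C := P * diagonal fun j => √(ev j)
  have hC : C * Cᵀ = P * diagonal ev * Pᵀ := by
    rw [transpose_mul, diagonal_transpose, Matrix.mul_assoc, ← Matrix.mul_assoc (diagonal _),
      diagonal_mul_diagonal, ← Matrix.mul_assoc]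
    congr
    exact funext fun j => Real.mul_self_sqrt (hev j)
  refine ⟨_, ((C.submatrix id Subtype.val).mul_submatrix_one_mul_transpose e).trans ?_ |>.symm⟩
  rw [transpose_submatrix, submatrix_val_mul_transpose_submatrix_val fun i j hj => ?_, hC]
  simp [C, not_not.mp hj]

theorem Matrix.range_mul_transpose {m n : Type*} [Fintype m] [DecidableEq m] [Fintype n] :
    range (fun V : Matrix m n ℝ => V * Vᵀ) = {ρ | ρ.PosSemidef ∧ ρ.rank ≤ Fintype.card n} := by
  ext ρ
  refine ⟨?_, fun ⟨hρ, hrank⟩ => ?_⟩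
  · rintro ⟨V, rfl⟩
    refine ⟨?_, (rank_mul_le_left _ _).trans (rank_le_card_width V)⟩
    simpa only [conjTranspose_eq_transpose_of_trivial] using posSemidef_self_mul_conjTranspose V
  · obtain ⟨U, hU⟩ := hρ.exists_eq_mul_transpose_of_rank_le hrank
    exact ⟨U, hU.symm⟩

section SupNorm

attribute [local instance] Matrix.normedAddCommGroup Matrix.normedSpace

theorem Matrix.norm_le_sqrt_norm_mul_transpose {m n : Type*} [Fintype m] [Fintype n]
    (V : Matrix m n ℝ) : ‖V‖ ≤ √‖V * Vᵀ‖ := by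
  refine (norm_le_iff (Real.sqrt_nonneg _)).2 fun i k => Real.abs_le_sqrt ?_
  calc V i k ^ 2 ≤ ∑ j, V i j * V i j :=
        sq (V i k) ▸ Finset.single_le_sum (fun j _ => mul_self_nonneg (V i j)) (Finset.mem_univ k)
    _ = (V * Vᵀ) i i := rfl
    _ ≤ ‖V * Vᵀ‖ := (Real.le_norm_self _).trans (norm_entry_le_entrywise_sup_norm _)

theorem Matrix.map_mul_transpose_nhds_le {m n : Type*} [Fintype m] [Fintype n] [DecidableEq n]
    {W U : Matrix m n ℝ} (h : W * Wᵀ = U * Uᵀ) :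
    Filter.map (fun V => V * Vᵀ) (𝓝 W) ≤ Filter.map (fun V => V * Vᵀ) (𝓝 U) := by
  obtain ⟨Q, hQ, rfl⟩ := exists_mem_orthogonalGroup_eq_mul_of_mul_transpose_eq h.symm
  have hinv : (fun V => V * Vᵀ) ∘ (· * Q) = fun V : Matrix m n ℝ => V * Vᵀ := by
    ext1 V
    simp only [Function.comp_apply, transpose_mul, Matrix.mul_assoc, ← Matrix.mul_assoc Q,
      (mem_orthogonalGroup_iff n ℝ).1 hQ, Matrix.one_mul]
  calc Filter.map (fun V => V * Vᵀ) (𝓝 W)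
        = Filter.map (fun V => V * Vᵀ) (Filter.map (· * Q) (𝓝 W)) := by
        rw [Filter.map_map, hinv]
    _ ≤ _ := Filter.map_mono ((continuous_id.matrix_mul continuous_const).tendsto W)

theorem Matrix.map_mul_transpose_nhds {m n : Type*} [Fintype m] [Fintype n] [DecidableEq n]
    (U : Matrix m n ℝ) :
    Filter.map (fun V => V * Vᵀ) (𝓝 U)
      = 𝓝[range fun V : Matrix m n ℝ => V * Vᵀ] (U * Uᵀ) := by
  set φ := fun V : Matrix m n ℝ => V * Vᵀ
  have hφ : Continuous φ := continuous_id.matrix_mul continuous_id.matrix_transpose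
  refine le_antisymm (tendsto_nhdsWithin_range.2 (hφ.tendsto U)) fun S hS => ?_
  by_contra hS'
  set 𝓕 := comap φ (𝓝[range φ] (φ U) ⊓ 𝓟 Sᶜ)
  have : NeBot 𝓕 :=
    (neBot_iff.2 (mt mem_iff_inf_principal_compl.2 hS')).comap_of_range_mem
      (mem_inf_of_left self_mem_nhdsWithin)
  have hK : Metric.closedBall 0 √(‖φ U‖ + 1) ∈ 𝓕 := by
    refine mem_of_superset (preimage_mem_comap (mem_inf_of_left
      (mem_nhdsWithin_of_mem_nhds (Metric.ball_mem_nhds (φ U) one_pos)))) fun V hV => ?_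
    rw [mem_closedBall_zero_iff]
    refine (norm_le_sqrt_norm_mul_transpose V).trans (Real.sqrt_le_sqrt ?_)
    have := norm_le_of_mem_closedBall (Metric.ball_subset_closedBall hV)
    linarith
  obtain ⟨W, -, hW⟩ := (isCompact_closedBall 0 _).exists_clusterPt (le_principal_iff.2 hK)
  have hWU : φ W = φ U := by
    by_contra hne
    refine clusterPt_iff_not_disjoint.1 (hW.map hφ.continuousAt ?_) (disjoint_nhds_nhds.2 hne)
    exact tendsto_comap.mono_right (inf_le_left.trans nhdsWithin_le_nhds)
  have hSW : φ ⁻¹' S ∈ 𝓝 W := map_mul_transpose_nhds_le hWU hS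
  have hSc : φ ⁻¹' Sᶜ ∈ 𝓕 := preimage_mem_comap (mem_inf_of_right (mem_principal_self _))
  obtain ⟨V, hVS, hVSc⟩ := clusterPt_iff_nonempty.1 hW hSW hSc
  exact hVSc hVS

end SupNorm

theorem isLocalMinOn_comp_iff_of_map_nhds_eq {X Y β : Type*} [TopologicalSpace X]
    [TopologicalSpace Y] [Preorder β] {φ : X → Y} {x : X}
    (hφ : Filter.map φ (𝓝 x) = 𝓝[range φ] (φ x)) (f : Y → β) (Z : Set Y) :
    IsLocalMinOn f (range φ ∩ Z) (φ x) ↔ IsLocalMinOn (f ∘ φ) (φ ⁻¹' Z) x := by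
  have hnhds : 𝓝[range φ ∩ Z] (φ x) = Filter.map φ (𝓝[φ ⁻¹' Z] x) := by
    rw [nhdsWithin_inter', ← hφ, nhdsWithin, map_inf_principal_preimage]
  simp only [IsLocalMinOn, IsMinFilter, hnhds, eventually_map, Function.comp_apply]

theorem bm_local_min_iff_real_general {d r : ℕ}
    (F h : Matrix (Fin d) (Fin d) ℝ → ℝ)
    (Ustar : Matrix (Fin d) (Fin r) ℝ) :
    IsLocalMinOn F
        {ρ : Matrix (Fin d) (Fin d) ℝ | ρ.PosSemidef ∧ h ρ = 0 ∧ ρ.rank ≤ r}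
        (Ustar * Ustarᵀ)
      ↔
    IsLocalMinOn (fun U : Matrix (Fin d) (Fin r) ℝ => F (U * Uᵀ))
        {U : Matrix (Fin d) (Fin r) ℝ | h (U * Uᵀ) = 0} Ustar := by
  have hfeasible : {ρ : Matrix (Fin d) (Fin d) ℝ | ρ.PosSemidef ∧ h ρ = 0 ∧ ρ.rank ≤ r}
      = (range fun U : Matrix (Fin d) (Fin r) ℝ => U * Uᵀ) ∩ {ρ | h ρ = 0} := by
    rw [range_mul_transpose, Fintype.card_fin]
    ext ρ
    exact ⟨fun ⟨hpsd, hzero, hrank⟩ => ⟨⟨hpsd, hrank⟩, hzero⟩,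
      fun ⟨⟨hpsd, hrank⟩, hzero⟩ => ⟨hpsd, hzero, hrank⟩⟩
  rw [hfeasible]
  exact isLocalMinOn_comp_iff_of_map_nhds_eq (map_mul_transpose_nhds Ustar) F {ρ | h ρ = 0}

/-- Theorem (Burer–Monteiro local minimality transfer, real symmetric case):
for continuous `F, h`, with `ρ⋆ = U⋆ U⋆ᵀ` and `h(ρ⋆) = 0`, the point `ρ⋆` is a
local minimizer of `F` on `{ρ : ρ symmetric PSD, h(ρ) = 0, rank ρ ≤ r}` iff `U⋆`
is a local minimizer of `U ↦ F(U Uᵀ)` on `{U : h(U Uᵀ) = 0}`. -/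
theorem bm_local_min_iff_real {d r : ℕ} (hr : 1 ≤ r) (hrd : r ≤ d)
    (F h : Matrix (Fin d) (Fin d) ℝ → ℝ)
    (hF : Continuous F) (hh : Continuous h)
    (Ustar : Matrix (Fin d) (Fin r) ℝ)
    (hUstar : h (Ustar * Ustarᵀ) = 0) :
    IsLocalMinOn F
        {ρ : Matrix (Fin d) (Fin d) ℝ | ρ.PosSemidef ∧ h ρ = 0 ∧ ρ.rank ≤ r}
        (Ustar * Ustarᵀ)
      ↔
    IsLocalMinOn (fun U : Matrix (Fin d) (Fin r) ℝ => F (U * Uᵀ))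
        {U : Matrix (Fin d) (Fin r) ℝ | h (U * Uᵀ) = 0} Ustar :=
  bm_local_min_iff_real_general F h Ustar
end
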